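/- arXiv:1709.03888 — 2 statements merged into one kernel-verified Lean document; each statement's English description precedes it below -/
import Mathlib

section
/- Let X be a quasi-median graph, C1 and C2 two distinct cliques contained in the same hyperplane, and a1 ∈ C1, a2 ∈ C2 two adjacent vertices. Then for every vertex b1 ∈ C1 distinct from a1, there exists b2 ∈ C2 such that a1, a2, b2, b1 span an induced 4-cycle (square). -/
/-!
Maximal cliques of a quasi-median graph are gated. Say that an edge crosses a clique `C` when
its endpoints have distinct gates in `C`. Crossing `C` survives both moves generating
hyperplanes: inside a clique by the triangle condition and the absence of `K₄⁻`, across a square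
by the quadrangle condition and the absence of `K₃,₂`. The edges of `C₂` cross `C₂`, so the
edge `a₁b₁` of `C₁`, lying in the same hyperplane, crosses `C₂` too. As distinct cliques of a
hyperplane are disjoint, the gate of `a₁` is its neighbour `a₂`; the gate `b₂` of `b₁` is then
the fourth corner, since the endpoints of a crossing edge are equally far from their own gates
and one step farther from each other's.
-/

variable {V : Type*}

namespace QM

/-- `y` is a gate for `x` in the vertex set `Y`. -/
def IsGate (G : SimpleGraph V) (Y : Set V) (x y : V) : Prop :=
  y ∈ Y ∧ ∀ z ∈ Y, G.dist x z = G.dist x y + G.dist y z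

/-- `Y` is gated: every vertex admits a gate in `Y`. -/
def Gated (G : SimpleGraph V) (Y : Set V) : Prop :=
  ∀ x : V, ∃ y : V, IsGate G Y x y

/-- Triangle condition of weak modularity. -/
def TriangleCondition (G : SimpleGraph V) : Prop :=
  ∀ u v w : V, G.Adj v w → G.dist u v = G.dist u w →
    ∃ x : V, G.Adj v x ∧ G.Adj w x ∧ G.dist u x + 1 = G.dist u v

/-- Quadrangle condition of weak modularity. -/
def QuadrangleCondition (G : SimpleGraph V) : Prop :=
  ∀ u z v w : V, G.Adj z v → G.Adj z w → v ≠ w →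
    G.dist u v + 1 = G.dist u z → G.dist u w + 1 = G.dist u z →
      ∃ x : V, G.Adj v x ∧ G.Adj w x ∧ G.dist u x + 2 = G.dist u z

/-- No induced `K₄` minus an edge. -/
def NoK4Minus (G : SimpleGraph V) : Prop :=
  ¬ ∃ a b c d : V, a ≠ b ∧ G.Adj c d ∧ G.Adj a c ∧ G.Adj a d ∧ G.Adj b c ∧ G.Adj b d ∧
    ¬ G.Adj a b

/-- No induced `K_{3,2}`. -/
def NoK32 (G : SimpleGraph V) : Prop :=
  ¬ ∃ a b c d e : V, a ≠ b ∧ a ≠ c ∧ b ≠ c ∧ d ≠ e ∧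
    G.Adj a d ∧ G.Adj a e ∧ G.Adj b d ∧ G.Adj b e ∧ G.Adj c d ∧ G.Adj c e ∧
    ¬ G.Adj a b ∧ ¬ G.Adj a c ∧ ¬ G.Adj b c ∧ ¬ G.Adj d e

/-- Quasi-median graph: weakly modular, no induced `K₄⁻`, no induced `K_{3,2}`. -/
def QuasiMedian (G : SimpleGraph V) : Prop :=
  TriangleCondition G ∧ QuadrangleCondition G ∧ NoK4Minus G ∧ NoK32 G

/-- A clique: a maximal complete subgraph, given by its (nonempty) vertex set. -/
def IsMaxClique (G : SimpleGraph V) (C : Set V) : Prop :=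
  G.IsClique C ∧ ∀ D : Set V, G.IsClique D → C ⊆ D → C = D

/-- All endpoints of the edge `e` lie in `C`. -/
def EdgeOf (C : Set V) (e : Sym2 V) : Prop := ∀ v ∈ e, v ∈ C

/-- Two edges lie in a common (maximal) clique. -/
def SameClique (G : SimpleGraph V) (e f : Sym2 V) : Prop :=
  ∃ C : Set V, IsMaxClique G C ∧ EdgeOf C e ∧ EdgeOf C f

/-- Two edges are opposite sides of an induced square. -/
def OppSquare (G : SimpleGraph V) (e f : Sym2 V) : Prop :=
  ∃ a b c d : V, e = s(a, b) ∧ f = s(c, d) ∧ G.Adj a b ∧ G.Adj c d ∧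
    G.Adj a c ∧ G.Adj b d ∧ ¬ G.Adj a d ∧ ¬ G.Adj b c ∧ a ≠ d ∧ b ≠ c

/-- The equivalence relation on edges generated by "being in a common clique or
opposite sides of a square"; its classes are the hyperplanes. -/
def HypRel (G : SimpleGraph V) : Sym2 V → Sym2 V → Prop :=
  Relation.EqvGen fun e f =>
    e ∈ G.edgeSet ∧ f ∈ G.edgeSet ∧ (SameClique G e f ∨ OppSquare G e f)

/-- `J` is a hyperplane of `G`: the class of some edge under `HypRel`. -/
def IsHyperplane (G : SimpleGraph V) (J : Set (Sym2 V)) : Prop :=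
  ∃ e ∈ G.edgeSet, J = {f | f ∈ G.edgeSet ∧ HypRel G e f}

/-- The clique `C` is contained in the hyperplane `J` (all of its edges belong to `J`;
such a clique carries at least one edge). -/
def CliqueIn (G : SimpleGraph V) (J : Set (Sym2 V)) (C : Set V) : Prop :=
  IsMaxClique G C ∧ (∃ a b : V, a ∈ C ∧ b ∈ C ∧ a ≠ b) ∧
    ∀ a ∈ C, ∀ b ∈ C, a ≠ b → s(a, b) ∈ J

/-- The hyperplane `J` separates `a` from `b`: every walk from `a` to `b` uses an edge
of `J`. -/
def Separates (G : SimpleGraph V) (J : Set (Sym2 V)) (a b : V) : Prop :=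
  ∀ p : G.Walk a b, ∃ e ∈ p.edges, e ∈ J

end QM

open SimpleGraph

namespace QM

variable {G : SimpleGraph V}

theorem NoK4Minus.adj (hk4 : NoK4Minus G) {a b c d : V} (hab : a ≠ b) (hcd : G.Adj c d)
    (hac : G.Adj a c) (had : G.Adj a d) (hbc : G.Adj b c) (hbd : G.Adj b d) : G.Adj a b := by
  by_contra h
  exact hk4 ⟨a, b, c, d, hab, hcd, hac, had, hbc, hbd, h⟩

theorem not_three_common_neighbors (hk4 : NoK4Minus G) (hk32 : NoK32 G) {v w x y z : V}
    (hvw : v ≠ w) (hnvw : ¬ G.Adj v w) (hxy : x ≠ y) (hxz : x ≠ z) (hyz : y ≠ z)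
    (hxv : G.Adj x v) (hxw : G.Adj x w) (hyv : G.Adj y v) (hyw : G.Adj y w)
    (hzv : G.Adj z v) (hzw : G.Adj z w) : False := by
  have hnadj : ∀ {s t : V}, G.Adj s v → G.Adj s w → G.Adj t v → G.Adj t w → ¬ G.Adj s t :=
    fun hsv hsw htv htw hst => hnvw (hk4.adj hvw hst hsv.symm htv.symm hsw.symm htw.symm)
  exact hk32 ⟨x, y, z, v, w, hxy, hxz, hyz, hvw, hxv, hxw, hyv, hyw, hzv, hzw,
    hnadj hxv hxw hyv hyw, hnadj hxv hxw hzv hzw, hnadj hyv hyw hzv hzw, hnvw⟩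

section MaxClique

variable {C D : Set V}

theorem IsMaxClique.mem_of_adj_of_adj (hk4 : NoK4Minus G) (hC : IsMaxClique G C)
    {t y z : V} (hy : y ∈ C) (hz : z ∈ C) (hyz : y ≠ z) (hty : G.Adj t y) (htz : G.Adj t z) :
    t ∈ C := by
  by_contra ht
  have hclique : G.IsClique (insert t C) := hC.1.insert fun c hc htc => by
    by_cases hcy : c = y
    · exact hcy ▸ hty
    by_cases hcz : c = z
    · exact hcz ▸ htz
    exact hk4.adj htc (hC.1 hy hz hyz) hty htz (hC.1 hc hy hcy) (hC.1 hc hz hcz)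
  exact ht (hC.2 _ hclique (Set.subset_insert t C) ▸ Set.mem_insert t C)

theorem IsMaxClique.eq_of_two_mem (hk4 : NoK4Minus G) (hC : IsMaxClique G C)
    (hD : IsMaxClique G D) {u v : V} (huv : u ≠ v) (huC : u ∈ C) (hvC : v ∈ C) (huD : u ∈ D)
    (hvD : v ∈ D) : C = D :=
  hC.2 D hD.1 fun t ht => by
    by_cases htu : t = u
    · exact htu ▸ huD
    by_cases htv : t = v
    · exact htv ▸ hvD
    exact hD.mem_of_adj_of_adj hk4 huD hvD huv (hC.1 ht huC htu) (hC.1 ht hvC htv)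

theorem IsMaxClique.gated (hconn : G.Connected) (htri : TriangleCondition G)
    (hk4 : NoK4Minus G) (hC : IsMaxClique G C) (hne : C.Nonempty) : Gated G C := by
  intro x
  obtain ⟨y, hy, hmin⟩ := (InvImage.wf (G.dist x) wellFounded_lt).has_min C hne
  refine ⟨y, hy, fun z hz => ?_⟩
  rcases eq_or_ne y z with rfl | hyz
  · simp
  have hyz1 : G.dist y z = 1 := dist_eq_one_iff_adj.mpr (hC.1 hy hz hyz)
  have hle : G.dist x z ≤ G.dist x y + G.dist y z := hconn.dist_triangle
  have hge := not_lt.mp (hmin z hz)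
  -- A tie `dist x z = dist x y` would put a vertex of `C` closer to `x`.
  by_contra hne'
  obtain ⟨t, hty, htz, ht⟩ := htri x y z (hC.1 hy hz hyz) (by omega)
  have := not_lt.mp (hmin t (hC.mem_of_adj_of_adj hk4 hy hz hyz hty.symm htz.symm))
  omega

end MaxClique

section Gates

variable {C : Set V} {x x' y y' : V}

theorem isGate_self (hx : x ∈ C) : IsGate G C x x := ⟨hx, fun z _ => by simp⟩

theorem IsGate.eq_of_dist_le (hconn : G.Connected) (hx : IsGate G C x x') {z : V} (hz : z ∈ C)
    (h : G.dist x z ≤ G.dist x x') : z = x' := by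
  have := hx.2 z hz
  exact (hconn.dist_eq_zero_iff.mp (by omega)).symm

theorem IsGate.unique (hconn : G.Connected) (hx : IsGate G C x x') (hy : IsGate G C x y) :
    y = x' :=
  hx.eq_of_dist_le hconn hy.1 (by have := hy.2 x' hx.1; omega)

theorem IsGate.eq_or_eq_of_adj (hconn : G.Connected) (hx : IsGate G C x x') (hy : y ∈ C)
    (hxy : G.Adj x y) : x = x' ∨ x' = y := by
  have h := hx.2 y hy
  rw [dist_eq_one_iff_adj.mpr hxy] at h
  rcases Nat.eq_zero_or_pos (G.dist x x') with h0 | h0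
  · exact .inl (hconn.dist_eq_zero_iff.mp h0)
  · exact .inr (hconn.dist_eq_zero_iff.mp (by omega))

theorem IsGate.dist_eq_of_adj_of_ne (hconn : G.Connected) (hC : G.IsClique C)
    (hxy : G.Adj x y) (hx : IsGate G C x x') (hy : IsGate G C y y') (hne : x' ≠ y') :
    G.dist y y' = G.dist x x' ∧ G.dist x y' = G.dist x x' + 1 ∧
      G.dist y x' = G.dist x x' + 1 := by
  have h₁ : G.dist x' y' = 1 := dist_eq_one_iff_adj.mpr (hC hx.1 hy.1 hne)
  have h₂ : G.dist y' x' = 1 := dist_eq_one_iff_adj.mpr (hC hy.1 hx.1 hne.symm)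
  have h₃ : G.dist x y = 1 := dist_eq_one_iff_adj.mpr hxy
  have h₄ : G.dist y x = 1 := dist_eq_one_iff_adj.mpr hxy.symm
  have e₁ := hx.2 y' hy.1
  have e₂ := hy.2 x' hx.1
  have t₁ : G.dist x y' ≤ G.dist x y + G.dist y y' := hconn.dist_triangle
  have t₂ : G.dist y x' ≤ G.dist y x + G.dist x x' := hconn.dist_triangle
  omega

theorem IsGate.eq_of_adj_of_dist_le (hconn : G.Connected) (hC : G.IsClique C)
    (hxy : G.Adj x y) (hx : IsGate G C x x') (hy : IsGate G C y y')
    (h : G.dist x y' ≤ G.dist y y') : x' = y' := by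
  by_contra hne
  have := hx.dist_eq_of_adj_of_ne hconn hC hxy hy hne
  omega

end Gates

structure IsSquare (G : SimpleGraph V) (a b c d : V) : Prop where
  adj_ab : G.Adj a b
  adj_bc : G.Adj b c
  adj_cd : G.Adj c d
  adj_da : G.Adj d a
  ne_ac : a ≠ c
  ne_bd : b ≠ d
  not_adj_ac : ¬ G.Adj a c
  not_adj_bd : ¬ G.Adj b d

section Squares

variable {C : Set V} {a b c d a' b' c' d' p : V}

theorem IsSquare.rotate (h : IsSquare G a b c d) : IsSquare G b c d a :=
  ⟨h.adj_bc, h.adj_cd, h.adj_da, h.adj_ab, h.ne_bd, h.ne_ac.symm, h.not_adj_bd,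
    fun h' => h.not_adj_ac h'.symm⟩

theorem IsSquare.gate_eq_of_gates_eq (hconn : G.Connected) (hquad : QuadrangleCondition G)
    (hk4 : NoK4Minus G) (hk32 : NoK32 G) (hC : G.IsClique C) (hsq : IsSquare G a b c d)
    (ha : IsGate G C a a') (hb : IsGate G C b p) (hc : IsGate G C c p) (hd : IsGate G C d p) :
    a' = p := by
  by_contra hne
  obtain ⟨hbp, hap, hba'⟩ := ha.dist_eq_of_adj_of_ne hconn hC hsq.adj_ab hb hne
  obtain ⟨hdp, -, hda'⟩ := ha.dist_eq_of_adj_of_ne hconn hC hsq.adj_da.symm hd hne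
  have hca' : G.dist c a' = G.dist c p + 1 := by
    rw [hc.2 a' ha.1, dist_eq_one_iff_adj.mpr (hC hc.1 ha.1 (Ne.symm hne))]
  have := G.dist_comm (u := a') (v := a)
  have := G.dist_comm (u := a') (v := b)
  have := G.dist_comm (u := a') (v := c)
  have := G.dist_comm (u := a') (v := d)
  have := G.dist_comm (u := p) (v := a)
  have := G.dist_comm (u := p) (v := b)
  have := G.dist_comm (u := p) (v := c)
  have := G.dist_comm (u := p) (v := d)
  -- In both cases the quadrangle condition yields a third common neighbour of a diagonal.
  by_cases hcloser : G.dist c p + 1 = G.dist a a'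
  · obtain ⟨y, hay, hcy, hy⟩ :=
      hquad a' b a c hsq.adj_ab.symm hsq.adj_bc hsq.ne_ac (by omega) (by omega)
    refine not_three_common_neighbors hk4 hk32 hsq.ne_ac hsq.not_adj_ac hsq.ne_bd
      (by rintro rfl; omega) (by rintro rfl; omega) hsq.adj_ab.symm hsq.adj_bc hsq.adj_da
      hsq.adj_cd.symm hay.symm hcy.symm
  · obtain ⟨x, hbx, hdx, hx⟩ :=
      hquad p a b d hsq.adj_ab hsq.adj_da.symm hsq.ne_bd (by omega) (by omega)
    refine not_three_common_neighbors hk4 hk32 hsq.ne_bd hsq.not_adj_bd hsq.ne_ac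
      (by rintro rfl; omega) (by rintro rfl; omega) hsq.adj_ab hsq.adj_da.symm
      hsq.adj_bc.symm hsq.adj_cd hbx.symm hdx.symm

theorem IsGate.le_dist_of_adj_of_adj (hconn : G.Connected) (hC : G.IsClique C)
    {w w' : V} (hab : G.Adj a b) (ha : IsGate G C a a') (hb : IsGate G C b b') (hne : a' ≠ b')
    (hw : IsGate G C w w') (haw : G.Adj a w) (hbw : G.Adj b w) :
    G.dist a a' ≤ G.dist w w' := by
  obtain ⟨hbb', -, -⟩ := ha.dist_eq_of_adj_of_ne hconn hC hab hb hne
  have hwa : G.dist a w = 1 := dist_eq_one_iff_adj.mpr haw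
  have hwb : G.dist b w = 1 := dist_eq_one_iff_adj.mpr hbw
  have ta : G.dist a w' ≤ G.dist a w + G.dist w w' := hconn.dist_triangle
  have tb : G.dist b w' ≤ G.dist b w + G.dist w w' := hconn.dist_triangle
  by_contra! hlt
  exact hne ((ha.eq_of_dist_le hconn hw.1 (by omega)).symm.trans
    (hb.eq_of_dist_le hconn hw.1 (by omega)))

theorem IsSquare.gate_ne_of_gate_ne (hconn : G.Connected) (htri : TriangleCondition G)
    (hquad : QuadrangleCondition G) (hk4 : NoK4Minus G) (hk32 : NoK32 G)
    (hC : G.IsClique C) (hg : Gated G C) (hsq : IsSquare G a b c d)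
    (ha : IsGate G C a a') (hb : IsGate G C b b') (hab : a' ≠ b')
    (hc : IsGate G C c c') (hd : IsGate G C d d') : c' ≠ d' := by
  rintro rfl
  by_cases hac : a' = c'
  · exact hab (hac.trans
      (hsq.rotate.gate_eq_of_gates_eq hconn hquad hk4 hk32 hC hb hc hd (hac ▸ ha)).symm)
  by_cases hbc : b' = c'
  · exact hab ((hsq.gate_eq_of_gates_eq hconn hquad hk4 hk32 hC ha (hbc ▸ hb) hc hd).trans
      hbc.symm)
  obtain ⟨hdc', hac', -⟩ := ha.dist_eq_of_adj_of_ne hconn hC hsq.adj_da.symm hd hac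
  obtain ⟨hcc', hbc', -⟩ := hb.dist_eq_of_adj_of_ne hconn hC hsq.adj_bc hc hbc
  obtain ⟨hbb', -, -⟩ := ha.dist_eq_of_adj_of_ne hconn hC hsq.adj_ab hb hab
  have := G.dist_comm (u := c') (v := a)
  have := G.dist_comm (u := c') (v := b)
  have := G.dist_comm (u := c') (v := d)
  -- A common neighbour `w` of `a, b` and then one `y` of `w, d` give a square `a w y d` with
  -- three corners gated at `c'`.
  obtain ⟨w, haw, hbw, hw⟩ := htri c' a b hsq.adj_ab (by omega)
  obtain ⟨w', hw'⟩ := hg w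
  have hw'c' : c' = w' := hw'.eq_of_dist_le hconn hc.1 (by
    have := ha.le_dist_of_adj_of_adj hconn hC hsq.adj_ab hb hab hw' haw hbw
    have := G.dist_comm (u := c') (v := w)
    omega)
  have hdw : d ≠ w := by rintro rfl; exact hsq.not_adj_bd hbw
  have hnwd : ¬ G.Adj w d := fun h =>
    hsq.not_adj_bd (hk4.adj hsq.ne_bd haw hsq.adj_ab.symm hbw hsq.adj_da h.symm)
  obtain ⟨y, hdy, hwy, hy⟩ := hquad c' a d w hsq.adj_da.symm haw hdw (by omega) (by omega)
  obtain ⟨y', hy'⟩ := hg y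
  have hy'c' : y' = c' := hy'.eq_of_adj_of_dist_le hconn hC hdy.symm hd (by
    have := G.dist_comm (u := c') (v := y)
    omega)
  have hay : a ≠ y := by rintro rfl; omega
  have hnay : ¬ G.Adj a y := fun h =>
    hnwd (hk4.adj hdw.symm h haw.symm hwy hsq.adj_da hdy)
  have hsq' : IsSquare G a w y d := ⟨haw, hwy, hdy.symm, hsq.adj_da, hay, hdw.symm, hnay, hnwd⟩
  exact hac (hsq'.gate_eq_of_gates_eq hconn hquad hk4 hk32 hC ha (hw'c' ▸ hw') (hy'c' ▸ hy') hd)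

end Squares

theorem IsGate.eq_of_isClique (hconn : G.Connected) (htri : TriangleCondition G)
    (hk4 : NoK4Minus G) {C D : Set V} (hC : G.IsClique C) (hD : G.IsClique D) {c d e e' p : V}
    (he : IsGate G C e e') (heD : e ∈ D) (hcD : c ∈ D) (hdD : d ∈ D) (hcd : c ≠ d)
    (hc : IsGate G C c p) (hd : IsGate G C d p) : e' = p := by
  by_contra hne
  have hec : e ≠ c := by rintro rfl; exact hne (hc.unique hconn he)
  have hed : e ≠ d := by rintro rfl; exact hne (hd.unique hconn he)
  obtain ⟨hcp, hep, -⟩ := he.dist_eq_of_adj_of_ne hconn hC (hD heD hcD hec) hc hne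
  obtain ⟨hdp, -, -⟩ := he.dist_eq_of_adj_of_ne hconn hC (hD heD hdD hed) hd hne
  have := G.dist_comm (u := p) (v := c)
  have := G.dist_comm (u := p) (v := d)
  obtain ⟨t, hct, hdt, ht⟩ := htri p c d (hD hcD hdD hcd) (by omega)
  have := G.dist_comm (u := p) (v := t)
  have het : e ≠ t := by rintro rfl; omega
  have het1 : G.dist e t = 1 := dist_eq_one_iff_adj.mpr
    (hk4.adj het (hD hcD hdD hcd) (hD heD hcD hec) (hD heD hdD hed) hct.symm hdt.symm)
  have : G.dist e p ≤ G.dist e t + G.dist t p := hconn.dist_triangle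
  omega

-- These are exactly the edges of the hyperplane of `C`; all that is needed here is that
-- their set is a union of `HypRel`-classes.
def Crosses (G : SimpleGraph V) (C : Set V) (e : Sym2 V) : Prop :=
  ∃ a b a' b', e = s(a, b) ∧ IsGate G C a a' ∧ IsGate G C b b' ∧ a' ≠ b'

section Crosses

variable {C : Set V} {e f : Sym2 V}

theorem Crosses.exists_gates {a b : V} (h : Crosses G C s(a, b)) :
    ∃ a' b', IsGate G C a a' ∧ IsGate G C b b' ∧ a' ≠ b' := by
  obtain ⟨x, y, x', y', hxy, hx, hy, hne⟩ := h
  rcases Sym2.eq_iff.mp hxy with ⟨rfl, rfl⟩ | ⟨rfl, rfl⟩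
  exacts [⟨x', y', hx, hy, hne⟩, ⟨y', x', hy, hx, hne.symm⟩]

theorem SameClique.symm (h : SameClique G e f) : SameClique G f e :=
  let ⟨D, hD, he, hf⟩ := h
  ⟨D, hD, hf, he⟩

theorem OppSquare.symm (h : OppSquare G e f) : OppSquare G f e :=
  let ⟨a, b, c, d, he, hf, hab, hcd, hac, hbd, had, hbc, hadne, hbcne⟩ := h
  ⟨c, d, a, b, hf, he, hcd, hab, hac.symm, hbd.symm, fun h => hbc h.symm, fun h => had h.symm,
    hbcne.symm, hadne.symm⟩

theorem Crosses.of_sameClique (hconn : G.Connected) (htri : TriangleCondition G)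
    (hk4 : NoK4Minus G) (hC : G.IsClique C) (hg : Gated G C) (he : Crosses G C e)
    (hf : f ∈ G.edgeSet) (hef : SameClique G e f) : Crosses G C f := by
  obtain ⟨a, b, a', b', rfl, ha, hb, hab⟩ := he
  obtain ⟨D, hD, heD, hfD⟩ := hef
  induction f using Sym2.ind with | _ c d =>
  obtain ⟨c', hc⟩ := hg c
  obtain ⟨d', hd⟩ := hg d
  refine ⟨c, d, c', d', rfl, hc, hd, ?_⟩
  rintro rfl
  have hcd : c ≠ d := (G.mem_edgeSet.mp hf).ne
  have hcD : c ∈ D := hfD c (Sym2.mem_mk_left c d)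
  have hdD : d ∈ D := hfD d (Sym2.mem_mk_right c d)
  have haD : a ∈ D := heD a (Sym2.mem_mk_left a b)
  have hbD : b ∈ D := heD b (Sym2.mem_mk_right a b)
  exact hab ((ha.eq_of_isClique hconn htri hk4 hC hD.1 haD hcD hdD hcd hc hd).trans
    (hb.eq_of_isClique hconn htri hk4 hC hD.1 hbD hcD hdD hcd hc hd).symm)

theorem Crosses.of_oppSquare (hconn : G.Connected) (htri : TriangleCondition G)
    (hquad : QuadrangleCondition G) (hk4 : NoK4Minus G) (hk32 : NoK32 G)
    (hC : G.IsClique C) (hg : Gated G C) (he : Crosses G C e) (hef : OppSquare G e f) :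
    Crosses G C f := by
  obtain ⟨a, b, c, d, rfl, rfl, hab, hcd, hac, hbd, had, hbc, hadne, hbcne⟩ := hef
  obtain ⟨a', b', ha, hb, hne⟩ := he.exists_gates
  obtain ⟨c', hc⟩ := hg c
  obtain ⟨d', hd⟩ := hg d
  have hsq : IsSquare G a b d c := ⟨hab, hbd, hcd.symm, hac.symm, hadne, hbcne, had, hbc⟩
  exact ⟨c, d, c', d', rfl, hc, hd,
    (hsq.gate_ne_of_gate_ne hconn htri hquad hk4 hk32 hC hg ha hb hne hd hc).symm⟩

theorem Crosses.iff_of_hypRel (hqm : QuasiMedian G) (hconn : G.Connected) (hC : G.IsClique C)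
    (hg : Gated G C) (h : HypRel G e f) : Crosses G C e ↔ Crosses G C f := by
  obtain ⟨htri, hquad, hk4, hk32⟩ := hqm
  have step : ∀ e f, e ∈ G.edgeSet ∧ f ∈ G.edgeSet ∧ (SameClique G e f ∨ OppSquare G e f) →
      Crosses G C e → Crosses G C f := by
    rintro e f ⟨-, hf, hsc | hos⟩ he
    · exact he.of_sameClique hconn htri hk4 hC hg hf hsc
    · exact he.of_oppSquare hconn htri hquad hk4 hk32 hC hg hos
  have eqv : Equivalence fun e f => Crosses G C e ↔ Crosses G C f :=
    ⟨fun _ => Iff.rfl, Iff.symm, Iff.trans⟩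
  refine eqv.eqvGen_iff.mp (h.mono fun e f hef => ⟨step e f hef, step f e ?_⟩)
  obtain ⟨he, hf, hsc | hos⟩ := hef
  exacts [⟨hf, he, .inl hsc.symm⟩, ⟨hf, he, .inr hos.symm⟩]

end Crosses

section Hyperplanes

variable {J : Set (Sym2 V)} {C₁ C₂ : Set V}

theorem IsHyperplane.hypRel (hJ : IsHyperplane G J) {e f : Sym2 V} (he : e ∈ J) (hf : f ∈ J) :
    HypRel G e f := by
  obtain ⟨e₀, -, rfl⟩ := hJ
  exact .trans _ _ _ (.symm _ _ he.2) hf.2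

theorem CliqueIn.crosses (hqm : QuasiMedian G) (hconn : G.Connected) (hJ : IsHyperplane G J)
    (h₁ : CliqueIn G J C₁) (h₂ : CliqueIn G J C₂) {x y : V} (hx : x ∈ C₁) (hy : y ∈ C₁)
    (hxy : x ≠ y) : Crosses G C₂ s(x, y) := by
  obtain ⟨u, v, hu, hv, huv⟩ := h₂.2.1
  have hg : Gated G C₂ := h₂.1.gated hconn hqm.1 hqm.2.2.1 ⟨u, hu⟩
  refine (Crosses.iff_of_hypRel hqm hconn h₂.1.1 hg
    (hJ.hypRel (h₂.2.2 u hu v hv huv) (h₁.2.2 x hx y hy hxy))).mp ?_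
  exact ⟨u, v, u, v, rfl, isGate_self hu, isGate_self hv, huv⟩

theorem CliqueIn.disjoint (hqm : QuasiMedian G) (hconn : G.Connected) (hJ : IsHyperplane G J)
    (h₁ : CliqueIn G J C₁) (h₂ : CliqueIn G J C₂) (hne : C₁ ≠ C₂) : Disjoint C₁ C₂ := by
  refine Set.disjoint_left.mpr fun v hv₁ hv₂ => ?_
  obtain ⟨u, hu, huv⟩ : ∃ u ∈ C₁, u ≠ v := by
    obtain ⟨a, b, ha, hb, hab⟩ := h₁.2.1
    by_cases hav : a = v
    · exact ⟨b, hb, hav ▸ hab.symm⟩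
    · exact ⟨a, ha, hav⟩
  obtain ⟨u', v', hu', hv', hne'⟩ := (h₁.crosses hqm hconn hJ h₂ hu hv₁ huv).exists_gates
  rw [(isGate_self hv₂).unique hconn hv'] at hne'
  have hu₂ : u ∈ C₂ :=
    ((hu'.eq_or_eq_of_adj hconn hv₂ (h₁.1.1 hu hv₁ huv)).resolve_right hne') ▸ hu'.1
  exact hne (h₁.1.eq_of_two_mem hqm.2.2.1 h₂.1 huv hu hv₁ hu₂ hv₂)

end Hyperplanes

end QM

open QM in
/-- given two distinct cliques `C₁, C₂` in the same hyperplane of a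
quasi-median graph and adjacent vertices `a₁ ∈ C₁`, `a₂ ∈ C₂`, every `b₁ ∈ C₁ \ {a₁}`
fits into an induced square `a₁, a₂, b₂, b₁` with `b₂ ∈ C₂`. -/
theorem square_completion
    (G : SimpleGraph V) (hqm : QuasiMedian G) (hconn : G.Connected)
    (J : Set (Sym2 V)) (hJ : IsHyperplane G J)
    (C₁ C₂ : Set V) (h₁ : CliqueIn G J C₁) (h₂ : CliqueIn G J C₂) (hne : C₁ ≠ C₂)
    (a₁ a₂ : V) (ha₁ : a₁ ∈ C₁) (ha₂ : a₂ ∈ C₂) (hadj : G.Adj a₁ a₂)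
    (b₁ : V) (hb₁ : b₁ ∈ C₁) (hb₁a₁ : b₁ ≠ a₁) :
    ∃ b₂ ∈ C₂, G.Adj a₂ b₂ ∧ G.Adj b₂ b₁ ∧ G.Adj b₁ a₁ ∧
      ¬ G.Adj a₁ b₂ ∧ ¬ G.Adj a₂ b₁ := by
  have ha₁C₂ : a₁ ∉ C₂ := Set.disjoint_left.mp (h₁.disjoint hqm hconn hJ h₂ hne) ha₁
  obtain ⟨α, β, hα, hβ, hαβ⟩ :=
    (h₁.crosses hqm hconn hJ h₂ ha₁ hb₁ hb₁a₁.symm).exists_gates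
  have hαa₂ : α = a₂ :=
    (hα.eq_or_eq_of_adj hconn ha₂ hadj).resolve_left fun h => ha₁C₂ (h ▸ hα.1)
  rw [hαa₂] at hα hαβ
  obtain ⟨hb₁β, ha₁β, hb₁a₂⟩ :=
    hα.dist_eq_of_adj_of_ne hconn h₂.1.1 (h₁.1.1 ha₁ hb₁ hb₁a₁.symm) hβ hαβ
  rw [dist_eq_one_iff_adj.mpr hadj] at hb₁β ha₁β hb₁a₂
  refine ⟨β, hβ.1, h₂.1.1 ha₂ hβ.1 hαβ, (dist_eq_one_iff_adj.mp hb₁β).symm,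
    h₁.1.1 hb₁ ha₁ hb₁a₁, fun h => ?_, fun h => ?_⟩
  · rw [dist_eq_one_iff_adj.mpr h] at ha₁β
    omega
  · rw [dist_eq_one_iff_adj.mpr h.symm] at hb₁a₂
    omega
end

section
/- Let X be a quasi-median graph, C a clique, J the hyperplane containing C, and a, b two vertices of X. Then the edge [a,b] belongs to J if and only if the gates of a and b onto C are distinct. -/
variable {V : Type*}

namespace QM

/-!
Let `p` be the gate map onto `C`. An edge `ab` with `p a ≠ p b` has both ends at the same
distance from `C`; stepping from `a` towards `C`, the quadrangle condition closes a square
whose opposite side again has distinct gates, so by induction on the distance `ab` is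
hyperplane-equivalent to the edge `p a p b` of `C`, hence lies in `J`. Conversely,
`p u ≠ p v` is invariant under the relation generating hyperplanes: inside a clique because
the triangle condition and the absence of `K₄⁻` force `p` to be injective there, and across a
square because a square with distinct gates on exactly one side would, through the triangle
and quadrangle conditions, yield either an induced `K_{3,2}` or another such square closer
to `C`.
-/

open SimpleGraph

variable {G : SimpleGraph V}

-- The induced 4-cycle `a b d c`, with opposite sides `ab` and `cd` as in `OppSquare`.
def IsSquare_s12 (G : SimpleGraph V) (a b c d : V) : Prop :=
  G.Adj a b ∧ G.Adj c d ∧ G.Adj a c ∧ G.Adj b d ∧ ¬ G.Adj a d ∧ ¬ G.Adj b c ∧ a ≠ d ∧ b ≠ c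

namespace IsSquare_s12

variable {a b c d : V}

lemma symm (h : IsSquare_s12 G a b c d) : IsSquare_s12 G c d a b := by
  obtain ⟨hab, hcd, hac, hbd, had, hbc, had', hbc'⟩ := h
  exact ⟨hcd, hab, hac.symm, hbd.symm, fun h => hbc h.symm, fun h => had h.symm,
    hbc'.symm, had'.symm⟩

lemma swap (h : IsSquare_s12 G a b c d) : IsSquare_s12 G b a d c := by
  obtain ⟨hab, hcd, hac, hbd, had, hbc, had', hbc'⟩ := h
  exact ⟨hab.symm, hcd.symm, hbd, hac, hbc, had, hbc', had'⟩

lemma oppSquare (h : IsSquare_s12 G a b c d) : OppSquare G s(a, b) s(c, d) :=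
  ⟨a, b, c, d, rfl, rfl, h⟩

end IsSquare_s12

lemma dist_le_dist_add_one_of_adj {u v : V} (h : G.Adj u v) (c : V) :
    G.dist u c ≤ G.dist v c + 1 := by
  rw [dist_comm, G.dist_comm (u := v)]
  rcases h.symm.diff_dist_adj (u := c) with h | h | h <;> omega

lemma not_adj_of_dist_add_two_le {u v c : V} (h : G.dist u c + 2 ≤ G.dist v c) :
    ¬ G.Adj v u := fun hadj => by
  have := dist_le_dist_add_one_of_adj hadj c
  omega

lemma exists_adj_dist_add_one_eq {u c : V} (h : 0 < G.dist u c) :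
    ∃ u', G.Adj u u' ∧ G.dist u' c + 1 = G.dist u c := by
  obtain ⟨w, hw⟩ := (Reachable.of_dist_ne_zero h.ne').exists_walk_length_eq_dist
  cases w with
  | nil => simp at h
  | cons hadj q =>
    refine ⟨_, hadj, ?_⟩
    have := dist_le q
    have := dist_le_dist_add_one_of_adj hadj c
    rw [Walk.length_cons] at hw
    omega

lemma TriangleCondition.exists_adj_adj (htri : TriangleCondition G) {u v w : V}
    (hvw : G.Adj v w) (h : G.dist v u = G.dist w u) :
    ∃ x, G.Adj v x ∧ G.Adj w x ∧ G.dist x u + 1 = G.dist v u := by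
  simp only [G.dist_comm (v := u)] at h ⊢
  exact htri u v w hvw h

lemma QuadrangleCondition.exists_adj_adj (hquad : QuadrangleCondition G) {u z v w : V}
    (hzv : G.Adj z v) (hzw : G.Adj z w) (hvw : v ≠ w)
    (hv : G.dist v u + 1 = G.dist z u) (hw : G.dist w u + 1 = G.dist z u) :
    ∃ x, G.Adj v x ∧ G.Adj w x ∧ G.dist x u + 2 = G.dist z u := by
  simp only [G.dist_comm (v := u)] at hv hw ⊢
  exact hquad u z v w hzv hzw hvw hv hw

structure CliqueGateMap (G : SimpleGraph V) (C : Set V) (p : V → V) : Prop where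
  isClique : G.IsClique C
  isGate : ∀ v, IsGate G C v (p v)

def IsSkewSquare (G : SimpleGraph V) (p : V → V) (x y z w : V) : Prop :=
  IsSquare_s12 G x y z w ∧ p x ≠ p y ∧ p z = p w

namespace CliqueGateMap

variable {C : Set V} {p : V → V}

lemma gate_mem (hg : CliqueGateMap G C p) (v : V) : p v ∈ C := (hg.isGate v).1

lemma dist_eq_add_one_of_ne (hg : CliqueGateMap G C p) {v c : V} (hc : c ∈ C)
    (hne : p v ≠ c) : G.dist v c = G.dist v (p v) + 1 := by
  rw [(hg.isGate v).2 c hc, dist_eq_one_iff_adj.mpr (hg.isClique (hg.gate_mem v) hc hne)]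

lemma gate_eq_self (hg : CliqueGateMap G C p) {v : V} (hv : v ∈ C) : p v = v := by
  by_contra hne
  have := hg.dist_eq_add_one_of_ne hv hne
  rw [dist_self] at this
  omega

lemma eq_gate_of_dist_eq_zero (hg : CliqueGateMap G C p) {v c : V} (hc : c ∈ C)
    (hne : p v ≠ c) (h : G.dist v (p v) = 0) : v = p v := by
  -- `G.dist` also vanishes between unreachable vertices; the second vertex `c` rules this out.
  have hvc : G.Adj v c := by
    rw [← dist_eq_one_iff_adj, hg.dist_eq_add_one_of_ne hc hne, h]
  exact (hvc.reachable.trans (hg.isClique hc (hg.gate_mem v) hne.symm).reachable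
    |>.dist_eq_zero_iff).mp h

lemma dist_gate_eq_of_adj (hg : CliqueGateMap G C p) {u v : V} (h : G.Adj u v)
    (hne : p u ≠ p v) : G.dist u (p u) = G.dist v (p v) := by
  have := hg.dist_eq_add_one_of_ne (hg.gate_mem v) hne
  have := hg.dist_eq_add_one_of_ne (hg.gate_mem u) hne.symm
  have := dist_le_dist_add_one_of_adj h (p v)
  have := dist_le_dist_add_one_of_adj h.symm (p u)
  omega

lemma gate_eq_of_adj_of_dist_lt (hg : CliqueGateMap G C p) {u v : V} (h : G.Adj u v)
    (hd : G.dist u (p v) < G.dist v (p v)) : p u = p v := by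
  by_contra hne
  have := hg.dist_gate_eq_of_adj h hne
  have := hg.dist_eq_add_one_of_ne (hg.gate_mem v) hne
  omega

lemma exists_adj_gate_eq (hg : CliqueGateMap G C p) {v : V} (h : 0 < G.dist v (p v)) :
    ∃ v', G.Adj v v' ∧ p v' = p v ∧ G.dist v' (p v) + 1 = G.dist v (p v) := by
  obtain ⟨v', hvv', hv'⟩ := exists_adj_dist_add_one_eq h
  exact ⟨v', hvv', hg.gate_eq_of_adj_of_dist_lt hvv'.symm (by omega), hv'⟩

lemma gate_ne_of_triangle (hg : CliqueGateMap G C p) (htri : TriangleCondition G)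
    (hk4 : NoK4Minus G) {x y z : V} (hxy : G.Adj x y) (hxz : G.Adj x z) (hyz : G.Adj y z)
    (hne : p x ≠ p y) : p z ≠ p x := by
  intro hzx
  have hx := hg.dist_gate_eq_of_adj hxy hne
  have hz := hg.dist_gate_eq_of_adj hyz.symm (hzx ▸ hne)
  rw [hzx] at hz
  have hy := hg.dist_eq_add_one_of_ne (hg.gate_mem x) hne.symm
  obtain ⟨t, hxt, hzt, ht⟩ := htri.exists_adj_adj (u := p x) hxz (by omega)
  exact hk4 ⟨y, t, x, z, ne_of_apply_ne (G.dist · (p x)) (by omega), hxz, hxy.symm, hyz,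
    hxt.symm, hzt.symm, not_adj_of_dist_add_two_le (c := p x) (by omega)⟩

lemma injOn_of_isClique (hg : CliqueGateMap G C p) (htri : TriangleCondition G)
    (hk4 : NoK4Minus G) {D : Set V} (hD : G.IsClique D) {x y : V} (hx : x ∈ D) (hy : y ∈ D)
    (hne : p x ≠ p y) : Set.InjOn p D := by
  have hxy : x ≠ y := ne_of_apply_ne p hne
  have hgx : ∀ w ∈ D, w ≠ x → p w ≠ p x := by
    intro w hw hwx
    by_cases hwy : w = y
    · exact hwy ▸ hne.symm
    · exact hg.gate_ne_of_triangle htri hk4 (hD hx hy hxy) (hD hx hw (Ne.symm hwx))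
        (hD hy hw (Ne.symm hwy)) hne
  intro u hu v hv huv
  by_contra huv'
  by_cases hux : u = x
  · exact hgx v hv (hux ▸ Ne.symm huv') (hux ▸ huv.symm)
  by_cases hvx : v = x
  · exact hgx u hu hux (hvx ▸ huv)
  exact hg.gate_ne_of_triangle htri hk4 (hD hu hx hux) (hD hu hv huv') (hD hx hv (Ne.symm hvx))
    (hgx u hu hux) huv.symm

lemma exists_lower_skewSquare_of_gate_eq (hg : CliqueGateMap G C p)
    (hquad : QuadrangleCondition G) (hk32 : NoK32 G) {x y z w : V}
    (h : IsSkewSquare G p x y z w) (hxz : p x = p z) :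
    ∃ x' y' z' w', IsSkewSquare G p x' y' z' w' ∧
      G.dist z' (p z') + G.dist w' (p w') < G.dist z (p z) + G.dist w (p w) := by
  obtain ⟨⟨hxy, hzw, hxz', hyw, hxw, hyz, hxw', hyz'⟩, hne, hpzw⟩ := h
  have hyw' : p y ≠ p w := hpzw ▸ hxz ▸ hne.symm
  have hlxy := hg.dist_gate_eq_of_adj hxy hne
  have hlyw := hg.dist_gate_eq_of_adj hyw hyw'
  have hx := hg.dist_eq_add_one_of_ne (hg.gate_mem y) hne
  have hzx := dist_le_dist_add_one_of_adj hxz' (p x)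
  have hzg : G.dist z (p x) = G.dist z (p z) := by rw [hxz]
  have hwg : G.dist w (p x) = G.dist w (p w) := by rw [hxz, hpzw]
  by_cases hlow : G.dist z (p z) + 1 = G.dist y (p y)
  · -- `x, w` and a common neighbour of `y, z` closer to `p y` span an induced `K_{3,2}`
    have hz := hg.dist_eq_add_one_of_ne (hg.gate_mem y) (hxz ▸ hne)
    have hw := hg.dist_eq_add_one_of_ne (hg.gate_mem y) hyw'.symm
    obtain ⟨t, hyt, hzt, ht⟩ := hquad.exists_adj_adj (u := p y) hxy hxz' hyz' (by omega)
      (by omega)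
    exact absurd ⟨x, w, t, y, z, hxw', ne_of_apply_ne (G.dist · (p y)) (by omega),
      ne_of_apply_ne (G.dist · (p y)) (by omega), hyz', hxy, hxz', hyw.symm, hzw.symm,
      hyt.symm, hzt.symm, hxw, not_adj_of_dist_add_two_le (c := p y) (by omega),
      not_adj_of_dist_add_two_le (c := p y) (by omega), hyz⟩ hk32
  · have hy := hg.dist_eq_add_one_of_ne (hg.gate_mem x) hne.symm
    obtain ⟨t, hxt, hwt, ht⟩ := hquad.exists_adj_adj (u := p x) hxy.symm hyw hxw'
      (by omega) (by omega)
    have hpt : p t = p x := hg.gate_eq_of_adj_of_dist_lt hxt.symm (by omega)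
    refine ⟨w, y, t, x, ⟨⟨hyw.symm, hxt.symm, hwt, hxy.symm, fun h => hxw h.symm,
      not_adj_of_dist_add_two_le (c := p x) (by omega), hxw'.symm,
      ne_of_apply_ne (G.dist · (p x)) (by omega)⟩, hyw'.symm, hpt⟩, ?_⟩
    rw [hpt]
    omega

lemma exists_lower_skewSquare_of_gate_ne (hg : CliqueGateMap G C p)
    (htri : TriangleCondition G) (hquad : QuadrangleCondition G) (hk4 : NoK4Minus G)
    {x y z w : V} (h : IsSkewSquare G p x y z w) (hxz : p x ≠ p z) (hyz : p y ≠ p z) :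
    ∃ x' y' z' w', IsSkewSquare G p x' y' z' w' ∧
      G.dist z' (p z') + G.dist w' (p w') < G.dist z (p z) + G.dist w (p w) := by
  obtain ⟨⟨hxy, hzw, hxz', hyw, hxw, hyz', hxw', hyz''⟩, hne, hpzw⟩ := h
  have hlxy := hg.dist_gate_eq_of_adj hxy hne
  have hlxz := hg.dist_gate_eq_of_adj hxz' hxz
  have hlyw := hg.dist_gate_eq_of_adj hyw (hpzw ▸ hyz)
  have hx := hg.dist_eq_add_one_of_ne (hg.gate_mem z) hxz
  have hy := hg.dist_eq_add_one_of_ne (hg.gate_mem z) hyz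
  obtain ⟨t, hxt, hyt, ht⟩ := htri.exists_adj_adj (u := p z) hxy (by omega)
  have hpt : p t = p z := by
    by_contra hptz
    have htz := hg.dist_eq_add_one_of_ne (hg.gate_mem z) hptz
    have hptx : p t = p x := by
      by_contra h
      have := hg.dist_gate_eq_of_adj hxt.symm h
      omega
    have hpty : p t = p y := by
      by_contra h
      have := hg.dist_gate_eq_of_adj hyt.symm h
      omega
    exact hne (hptx.symm.trans hpty)
  have hzt : ¬ G.Adj z t := fun h =>
    hg.gate_ne_of_triangle htri hk4 hxz'.symm h hxt hxz.symm hpt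
  have hzt' : z ≠ t := fun h => hyz' (h ▸ hyt)
  obtain ⟨s, hzs, hts, hs⟩ := hquad.exists_adj_adj (u := p z) hxz' hxt hzt' (by omega) ht
  have hps : p s = p z := hg.gate_eq_of_adj_of_dist_lt hzs.symm (by omega)
  refine ⟨x, z, t, s, ⟨⟨hxz', hts, hxt, hzs, not_adj_of_dist_add_two_le (c := p z) (by omega),
    hzt, ne_of_apply_ne (G.dist · (p z)) (by omega), hzt'⟩, hxz, hpt.trans hps.symm⟩, ?_⟩
  rw [hpt, hps]
  omega

lemma exists_lower_skewSquare (hg : CliqueGateMap G C p) (hqm : QuasiMedian G)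
    {x y z w : V} (h : IsSkewSquare G p x y z w) :
    ∃ x' y' z' w', IsSkewSquare G p x' y' z' w' ∧
      G.dist z' (p z') + G.dist w' (p w') < G.dist z (p z) + G.dist w (p w) := by
  obtain ⟨htri, hquad, hk4, hk32⟩ := hqm
  obtain ⟨hsq, hne, hpzw⟩ := h
  by_cases hyz : p y = p z
  · obtain ⟨x', y', z', w', h', hlt⟩ := hg.exists_lower_skewSquare_of_gate_eq hquad hk32
      (x := y) (y := x) (z := w) (w := z) ⟨hsq.swap, hne.symm, hpzw.symm⟩ (hyz.trans hpzw)
    exact ⟨x', y', z', w', h', by omega⟩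
  by_cases hxz : p x = p z
  · exact hg.exists_lower_skewSquare_of_gate_eq hquad hk32 ⟨hsq, hne, hpzw⟩ hxz
  · exact hg.exists_lower_skewSquare_of_gate_ne htri hquad hk4 ⟨hsq, hne, hpzw⟩ hxz hyz

lemma not_isSkewSquare (hg : CliqueGateMap G C p) (hqm : QuasiMedian G) (x y z w : V) :
    ¬ IsSkewSquare G p x y z w := by
  induction hn : G.dist z (p z) + G.dist w (p w) using Nat.strong_induction_on
    generalizing x y z w with
  | _ n ih =>
    intro h
    obtain ⟨x', y', z', w', h', hlt⟩ := hg.exists_lower_skewSquare hqm h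
    exact ih _ (hn ▸ hlt) x' y' z' w' rfl h'

lemma isDiag_map_iff_of_sameClique (hg : CliqueGateMap G C p) (htri : TriangleCondition G)
    (hk4 : NoK4Minus G) {e f : Sym2 V} (he : e ∈ G.edgeSet) (hf : f ∈ G.edgeSet)
    (h : SameClique G e f) : (e.map p).IsDiag ↔ (f.map p).IsDiag := by
  obtain ⟨D, hD, heD, hfD⟩ := h
  induction e using Sym2.ind with | _ u v => ?_
  induction f using Sym2.ind with | _ r s => ?_
  rw [mem_edgeSet] at he hf
  simp only [Sym2.map_mk, Sym2.mk_isDiag_iff]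
  have hu := heD u (Sym2.mem_mk_left u v)
  have hv := heD v (Sym2.mem_mk_right u v)
  have hr := hfD r (Sym2.mem_mk_left r s)
  have hs := hfD s (Sym2.mem_mk_right r s)
  refine not_iff_not.mp ⟨fun huv hrs => hf.ne ?_, fun hrs huv => he.ne ?_⟩
  · exact hg.injOn_of_isClique htri hk4 hD.1 hu hv huv hr hs hrs
  · exact hg.injOn_of_isClique htri hk4 hD.1 hr hs hrs hu hv huv

lemma isDiag_map_iff_of_oppSquare (hg : CliqueGateMap G C p) (hqm : QuasiMedian G)
    {e f : Sym2 V} (h : OppSquare G e f) : (e.map p).IsDiag ↔ (f.map p).IsDiag := by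
  obtain ⟨a, b, c, d, rfl, rfl, hsq : IsSquare_s12 G a b c d⟩ := h
  simp only [Sym2.map_mk, Sym2.mk_isDiag_iff]
  exact ⟨fun hab => not_not.mp fun hcd => hg.not_isSkewSquare hqm c d a b ⟨hsq.symm, hcd, hab⟩,
    fun hcd => not_not.mp fun hab => hg.not_isSkewSquare hqm a b c d ⟨hsq, hab, hcd⟩⟩

lemma isDiag_map_iff_of_hypRel (hg : CliqueGateMap G C p) (hqm : QuasiMedian G)
    {e f : Sym2 V} (h : HypRel G e f) : (e.map p).IsDiag ↔ (f.map p).IsDiag := by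
  have hequiv : Equivalence fun e f : Sym2 V => ((e.map p).IsDiag ↔ (f.map p).IsDiag) :=
    ⟨fun _ => Iff.rfl, Iff.symm, Iff.trans⟩
  refine hequiv.eqvGen_iff.mp (Relation.EqvGen.mono ?_ _ _ h)
  rintro e f ⟨he, hf, hsc | hsq⟩
  · exact hg.isDiag_map_iff_of_sameClique hqm.1 hqm.2.2.1 he hf hsc
  · exact hg.isDiag_map_iff_of_oppSquare hqm hsq

lemma hypRel_map_gate (hg : CliqueGateMap G C p) (hquad : QuadrangleCondition G)
    (hk4 : NoK4Minus G) {a b : V} (hab : G.Adj a b) (hne : p a ≠ p b) :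
    HypRel G s(p a, p b) s(a, b) := by
  induction hn : G.dist a (p a) generalizing a b with
  | zero =>
    have hlev := hg.dist_gate_eq_of_adj hab hne
    rw [← hg.eq_gate_of_dist_eq_zero (hg.gate_mem b) hne hn,
      ← hg.eq_gate_of_dist_eq_zero (hg.gate_mem a) hne.symm (hlev ▸ hn)]
    exact Relation.EqvGen.refl _
  | succ n ih =>
    have hlev := hg.dist_gate_eq_of_adj hab hne
    obtain ⟨a', haa', hpa', ha'⟩ := hg.exists_adj_gate_eq (v := a) (by omega)
    have ha := hg.dist_eq_add_one_of_ne (hg.gate_mem b) hne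
    have ha'b := hg.dist_eq_add_one_of_ne (hg.gate_mem b) (hpa' ▸ hne)
    rw [hpa'] at ha'b
    have hba' : b ≠ a' := fun h => hne (h ▸ hpa').symm
    obtain ⟨x, hbx, ha'x, hx⟩ := hquad.exists_adj_adj (u := p b) hab haa' hba' (by omega)
      (by omega)
    have hpx : p x = p b := hg.gate_eq_of_adj_of_dist_lt hbx.symm (by omega)
    have hax : ¬ G.Adj a x := not_adj_of_dist_add_two_le (c := p b) (by omega)
    have hax' : a ≠ x := ne_of_apply_ne (G.dist · (p b)) (by omega)
    have hsq : IsSquare_s12 G a b a' x := ⟨hab, ha'x, haa', hbx, hax,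
      fun h => hk4 ⟨a, x, b, a', hax', h, hab, haa', hbx.symm, ha'x.symm, hax⟩, hax', hba'⟩
    have ih' := ih ha'x (by rw [hpa', hpx]; exact hne) (by rw [hpa']; omega)
    rw [hpa', hpx] at ih'
    exact ih'.trans _ _ _ <| .symm _ _ <| .rel _ _ ⟨hab, ha'x, .inr hsq.oppSquare⟩

end CliqueGateMap

end QM

open QM in
theorem edge_in_hyperplane_iff_gates_distinct_general
    (G : SimpleGraph V) (hqm : QuasiMedian G)
    (C : Set V) (hC : IsMaxClique G C)
    (p : V → V) (hp : ∀ v : V, IsGate G C v (p v))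
    (J : Set (Sym2 V)) (hJ : IsHyperplane G J) (hJC : CliqueIn G J C)
    (a b : V) (hab : G.Adj a b) :
    s(a, b) ∈ J ↔ p a ≠ p b := by
  have hg : CliqueGateMap G C p := ⟨hC.1, hp⟩
  obtain ⟨e₀, -, rfl⟩ := hJ
  obtain ⟨-, ⟨c, d, hc, hd, hcd⟩, hJC⟩ := hJC
  constructor
  · rintro ⟨-, hab'⟩
    have hrel : HypRel G s(c, d) s(a, b) := .trans _ _ _ (.symm _ _ (hJC c hc d hd hcd).2) hab'
    simpa [hg.gate_eq_self hc, hg.gate_eq_self hd, hcd] using hg.isDiag_map_iff_of_hypRel hqm hrel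
  · intro hne
    exact ⟨hab, .trans _ _ _ (hJC _ (hg.gate_mem a) _ (hg.gate_mem b) hne).2
      (hg.hypRel_map_gate hqm.2.1 hqm.2.2.1 hab hne)⟩

open QM in
/-- in a quasi-median graph, an edge `[a,b]` belongs to the hyperplane `J`
containing a clique `C` if and only if the gates of `a` and `b` in `C` are distinct. -/
theorem edge_in_hyperplane_iff_gates_distinct
    (G : SimpleGraph V) (hqm : QuasiMedian G) (hconn : G.Connected)
    (C : Set V) (hC : IsMaxClique G C)
    (p : V → V) (hp : ∀ v : V, IsGate G C v (p v))
    (J : Set (Sym2 V)) (hJ : IsHyperplane G J) (hJC : CliqueIn G J C)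
    (a b : V) (hab : G.Adj a b) :
    s(a, b) ∈ J ↔ p a ≠ p b :=
  edge_in_hyperplane_iff_gates_distinct_general G hqm C hC p hp J hJ hJC a b hab
end
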